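/- Let g : [0,∞) → [0,∞) be continuous, nondecreasing with g(0) = 0 and g(u) > 0 for u > 0, and suppose ∫_ε^γ du/g(u) → ∞ as ε → 0⁺ for some γ > 0. Then there is no function Ψ* : [0,T₀] → ℝ that is C¹, nonnegative, with Ψ*(0) = 0, Ψ*(T₀) = γ > 0, and Ψ*'(x) ≤ g(Ψ*(x)) for all x ∈ [0,T₀]. -/
import Mathlib


open Real Set Filter MeasureTheory

theorem osgood_contradiction
    (T₀ γ : ℝ) (hT₀ : 0 < T₀) (hγ : 0 < γ)
    (g : ℝ → ℝ) (hgcont : ContinuousOn g (Set.Ici 0))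
    (hgmono : MonotoneOn g (Set.Ici 0))
    (hg0 : g 0 = 0) (hgpos : ∀ u : ℝ, 0 < u → 0 < g u)
    (hdiv : Filter.Tendsto (fun ε : ℝ => ∫ u in ε..γ, 1 / g u)
      (nhdsWithin 0 (Set.Ioi 0)) Filter.atTop)
    (Ψ Ψ' : ℝ → ℝ)
    (hderiv : ∀ x ∈ Set.Icc (0:ℝ) T₀, HasDerivAt Ψ (Ψ' x) x)
    (hΨ'cont : ContinuousOn Ψ' (Set.Icc 0 T₀))
    (hnonneg : ∀ x ∈ Set.Icc (0:ℝ) T₀, 0 ≤ Ψ x)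
    (h0 : Ψ 0 = 0) (hend : Ψ T₀ = γ)
    (hineq : ∀ x ∈ Set.Icc (0:ℝ) T₀, Ψ' x ≤ g (Ψ x)) :
    False := by
  -- f = 1/g is continuous on Ioi 0
  set f : ℝ → ℝ := fun u => 1 / g u with hf_def
  have hfca : ∀ y : ℝ, 0 < y → ContinuousAt f y := by
    intro y hy
    have hgy : ContinuousAt g y :=
      (hgcont y (le_of_lt hy)).continuousAt (Ici_mem_nhds hy)
    exact continuousAt_const.div hgy (hgpos y hy).ne'
  have hfc : ContinuousOn f (Set.Ioi 0) := fun y hy => (hfca y hy).continuousWithinAt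
  have hΨcont : ContinuousOn Ψ (Set.Icc 0 T₀) := fun x hx =>
    (hderiv x hx).continuousAt.continuousWithinAt
  -- Main claim: for every ε in (0, γ), ∫_ε^γ f ≤ T₀
  have key : ∀ ε : ℝ, 0 < ε → ε < γ → (∫ u in ε..γ, 1 / g u) ≤ T₀ := by
    intro ε hε hεγ
    -- find the last time Ψ equals ε
    set S : Set ℝ := Set.Icc 0 T₀ ∩ Ψ ⁻¹' {ε} with hS_def
    have hS_ne : S.Nonempty := by
      have := intermediate_value_Icc hT₀.le hΨcont
      rw [h0, hend] at this
      obtain ⟨c, hc, hcε⟩ := this ⟨hε.le, hεγ.le⟩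
      exact ⟨c, hc, hcε⟩
    have hS_closed : IsClosed S :=
      hΨcont.preimage_isClosed_of_isClosed isClosed_Icc isClosed_singleton
    have hS_compact : IsCompact S :=
      (isCompact_Icc (a := (0:ℝ)) (b := T₀)).of_isClosed_subset hS_closed
        (Set.inter_subset_left)
    set a : ℝ := sSup S with ha_def
    have haS : a ∈ S := hS_compact.sSup_mem hS_ne
    obtain ⟨⟨ha0, haT⟩, haε⟩ := haS
    have haε : Ψ a = ε := haε
    have haT' : a < T₀ := by
      rcases lt_or_eq_of_le haT with h | h
      · exact h
      · exfalso; rw [h, hend] at haε; exact absurd haε (ne_of_gt hεγ)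
    -- on [a, T₀], Ψ ≥ ε
    have hge : ∀ x ∈ Set.Icc a T₀, ε ≤ Ψ x := by
      intro x ⟨hax, hxT⟩
      by_contra hlt
      push_neg at hlt
      have hx0 : (0:ℝ) ≤ x := le_trans ha0 hax
      have hΨc' : ContinuousOn Ψ (Set.Icc x T₀) :=
        hΨcont.mono (Set.Icc_subset_Icc hx0 le_rfl)
      have := intermediate_value_Icc hxT hΨc'
      rw [hend] at this
      obtain ⟨y, hy, hyε⟩ := this ⟨hlt.le, hεγ.le⟩
      have hyS : y ∈ S := ⟨⟨le_trans hx0 hy.1, hy.2⟩, hyε⟩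
      have hya : y ≤ a := le_csSup hS_compact.bddAbove hyS
      have hxa : a < x := by
        rcases lt_or_eq_of_le hax with h | h
        · exact h
        · exfalso; rw [← h] at hlt; rw [haε] at hlt; exact lt_irrefl _ hlt
      exact absurd (le_trans hy.1 hya) (not_le.mpr hxa)
    -- antiderivative G
    set G : ℝ → ℝ := fun y => ∫ u in γ..y, f u with hG_def
    have hG : ∀ y : ℝ, ε ≤ y → HasDerivAt G (f y) y := by
      intro y hy
      have hy0 : (0:ℝ) < y := lt_of_lt_of_le hε hy
      have hsub : Set.uIcc γ y ⊆ Set.Ioi 0 := by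
        intro u hu
        have h1 : min γ y ≤ u := hu.1
        have h2 : (0:ℝ) < min γ y := lt_min hγ hy0
        exact lt_of_lt_of_le h2 h1
      have hint : IntervalIntegrable f volume γ y :=
        (hfc.mono hsub).intervalIntegrable
      have hmeas : StronglyMeasurableAtFilter f (nhds y) volume :=
        hfc.stronglyMeasurableAtFilter isOpen_Ioi y hy0
      exact intervalIntegral.integral_hasDerivAt_right hint hmeas (hfca y hy0)
    -- φ x = x - G (Ψ x) is monotone on [a, T₀]
    set φ : ℝ → ℝ := fun x => x - G (Ψ x) with hφ_def
    have hφderiv : ∀ x ∈ Set.Icc a T₀, HasDerivAt φ (1 - f (Ψ x) * Ψ' x) x := by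
      intro x hx
      have hx' : x ∈ Set.Icc 0 T₀ := ⟨le_trans ha0 hx.1, hx.2⟩
      have h1 : HasDerivAt (fun x => G (Ψ x)) (f (Ψ x) * Ψ' x) x :=
        (hG (Ψ x) (hge x hx)).comp x (hderiv x hx')
      exact (hasDerivAt_id x).sub h1
    have hφd_nonneg : ∀ x ∈ Set.Icc a T₀, 0 ≤ 1 - f (Ψ x) * Ψ' x := by
      intro x hx
      have hx' : x ∈ Set.Icc 0 T₀ := ⟨le_trans ha0 hx.1, hx.2⟩
      have hΨpos : 0 < Ψ x := lt_of_lt_of_le hε (hge x hx)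
      have hgΨpos : 0 < g (Ψ x) := hgpos _ hΨpos
      have hfpos : 0 ≤ f (Ψ x) := by positivity
      have : f (Ψ x) * Ψ' x ≤ f (Ψ x) * g (Ψ x) :=
        mul_le_mul_of_nonneg_left (hineq x hx') hfpos
      have heq : f (Ψ x) * g (Ψ x) = 1 := by
        simp only [hf_def]; field_simp
      linarith
    have hφmono : MonotoneOn φ (Set.Icc a T₀) := by
      apply monotoneOn_of_deriv_nonneg (convex_Icc a T₀)
      · exact fun x hx => (hφderiv x hx).continuousAt.continuousWithinAt
      · intro x hx
        have hx' : x ∈ Set.Icc a T₀ := interior_subset hx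
        exact (hφderiv x hx').differentiableAt.differentiableWithinAt
      · intro x hx
        have hx' : x ∈ Set.Icc a T₀ := interior_subset hx
        rw [(hφderiv x hx').deriv]
        exact hφd_nonneg x hx'
    have hφle : φ a ≤ φ T₀ :=
      hφmono ⟨le_rfl, haT'.le⟩ ⟨haT'.le, le_rfl⟩ haT'.le
    have hGγ : G γ = 0 := by simp [hG_def]
    have hGε : G ε = - ∫ u in ε..γ, f u := by
      simp [hG_def, intervalIntegral.integral_symm γ ε]
    have hφa : φ a = a + ∫ u in ε..γ, f u := by
      simp only [hφ_def, haε, hGε]; ring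
    have hφT : φ T₀ = T₀ := by
      simp [hφ_def, hend, hGγ]
    rw [hφa, hφT] at hφle
    have : (∫ u in ε..γ, f u) ≤ T₀ - a := by linarith
    calc (∫ u in ε..γ, 1 / g u) = ∫ u in ε..γ, f u := rfl
      _ ≤ T₀ - a := this
      _ ≤ T₀ := by linarith
  -- contradiction with divergence
  have h1 : ∀ᶠ ε in nhdsWithin (0:ℝ) (Set.Ioi 0), T₀ + 1 ≤ ∫ u in ε..γ, 1 / g u :=
    hdiv.eventually (eventually_ge_atTop (T₀ + 1))
  have h2 : ∀ᶠ ε in nhdsWithin (0:ℝ) (Set.Ioi 0), ε ∈ Set.Ioi (0:ℝ) :=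
    self_mem_nhdsWithin
  have h3 : ∀ᶠ ε in nhdsWithin (0:ℝ) (Set.Ioi 0), ε < γ :=
    eventually_nhdsWithin_of_eventually_nhds (eventually_lt_nhds hγ)
  obtain ⟨ε, hε1, hε2, hε3⟩ := (h1.and (h2.and h3)).exists
  have := key ε hε2 hε3
  linarith
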